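/- arXiv:0712.1609 — 3 statements merged into one kernel-verified Lean document; each statement's English description precedes it below -/
import Mathlib

section
/- Let (Ω, 𝒜, ℙ) be a probability space with a filtration (ℱ_i)_{i≥0}, and let x(i) : Ω → ℝ^N be an (ℱ_i)-adapted process. Suppose that for every i the random variable V(i, x(i)) is integrable and a.s. 𝔼[V(i+1, x(i+1)) | ℱ_i] − V(i, x(i)) ≤ g(i)(1 + V(i, x(i))) − α(i)φ(i, x(i)). Then ℙ[lim_{i→∞} ρ(x(i), B) = 0] = 1, i.e., the process converges almost surely to the set B. -/
open MeasureTheory ProbabilityTheory Filter Finset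

open scoped Topology

/-! With `Y n = V n (x n)` and `Z n = α n φ n (x n)` the drift condition is the Robbins–Siegmund
inequality `𝔼[Y (n+1) | ℱ n] ≤ (1 + g n) Y n + g n - Z n`. Dividing by `∏_{j<n} (1 + g j)`, which
converges because `∑ g < ∞`, reduces it to `𝔼[Y (n+1) | ℱ n] ≤ Y n + b n - Z n` with `∑ b < ∞`;
then `Y n + ∑_{j<n} (Z j - b j)` is a supermartingale bounded below by `-∑ b`, hence converges
a.s. So almost surely `V n (x n)` converges and `∑ α n φ n (x n) < ∞`. Since `∑ α = ∞`,
`φ n (x n)` is frequently small, so `x n` is frequently close to `B`; this forces the limit of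
`V n (x n)` to be `0`, and then `ρ(x n, B) → 0`. -/

theorem frequently_lt_of_summable_mul {α u : ℕ → ℝ} (hα : ∀ n, 0 ≤ α n)
    (hα_div : Tendsto (fun n => ∑ i ∈ range n, α i) atTop atTop)
    (hαu : Summable fun n => α n * u n) {c : ℝ} (hc : 0 < c) :
    ∃ᶠ n in atTop, u n < c := by
  by_contra h
  have hle : ∀ᶠ n in atTop, c ≤ u n := by simpa using h
  have hα_sum : Summable α := by
    refine (hαu.div_const c).of_norm_bounded_eventually_nat ?_
    filter_upwards [hle] with n hn
    rw [Real.norm_of_nonneg (hα n), le_div_iff₀ hc]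
    exact mul_le_mul_of_nonneg_left hn (hα n)
  exact not_tendsto_atTop_of_tendsto_nhds hα_sum.hasSum.tendsto_sum_nat hα_div

theorem tendsto_and_summable_of_tendsto_add_sum {u v : ℕ → ℝ} {c : ℝ}
    (hu : ∀ n, 0 ≤ u n) (hv : ∀ n, 0 ≤ v n)
    (h : Tendsto (fun n => u n + ∑ j ∈ range n, v j) atTop (𝓝 c)) :
    (∃ l, Tendsto u atTop (𝓝 l)) ∧ Summable v := by
  obtain ⟨M, hM⟩ := h.bddAbove_range
  have hv_sum : Summable v := summable_of_sum_range_le hv fun n =>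
    (le_add_of_nonneg_left (hu n)).trans (hM ⟨n, rfl⟩)
  refine ⟨⟨c - ∑' j, v j, ?_⟩, hv_sum⟩
  simpa using h.sub hv_sum.hasSum.tendsto_sum_nat

theorem integrable_of_condExp_le_sub {Ω : Type*} {m m₀ : MeasurableSpace Ω} {μ : Measure Ω}
    {Y U Z : Ω → ℝ} (hY_nonneg : 0 ≤ᵐ[μ] Y) (hU : Integrable U μ) (hZ : AEStronglyMeasurable Z μ)
    (hZ_nonneg : 0 ≤ᵐ[μ] Z) (h : μ[Y|m] ≤ᵐ[μ] U - Z) : Integrable Z μ := by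
  refine hU.mono' hZ ?_
  filter_upwards [condExp_nonneg (m := m) hY_nonneg, hZ_nonneg, h] with ω hY hZ h
  simp only [Pi.zero_apply, Pi.sub_apply] at hY hZ h
  rw [Real.norm_of_nonneg hZ]
  linarith

section Martingale

variable {Ω : Type*} {m : MeasurableSpace Ω} {μ : Measure Ω} {ℱ : Filtration ℕ m}

theorem MeasureTheory.Supermartingale.exists_ae_tendsto_of_nonneg [IsFiniteMeasure μ]
    {f : ℕ → Ω → ℝ} (hf : Supermartingale f ℱ μ) (hf_nonneg : ∀ n ω, 0 ≤ f n ω) :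
    ∀ᵐ ω ∂μ, ∃ c, Tendsto (fun n => f n ω) atTop (𝓝 c) := by
  have hbdd : ∀ n, eLpNorm ((-f) n) 1 μ ≤ ENNReal.ofReal (∫ ω, f 0 ω ∂μ) := fun n => by
    rw [Pi.neg_apply, eLpNorm_neg, eLpNorm_one_eq_lintegral_enorm,
      ← ofReal_integral_norm_eq_lintegral_enorm (hf.integrable n)]
    refine ENNReal.ofReal_le_ofReal ?_
    simp_rw [Real.norm_of_nonneg (hf_nonneg n _)]
    simpa using hf.setIntegral_le (Nat.zero_le n) MeasurableSet.univ
  filter_upwards [hf.neg.exists_ae_tendsto_of_bdd hbdd] with ω ⟨c, hc⟩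
  exact ⟨-c, by simpa using hc.neg⟩

theorem supermartingale_add_sum_of_condExp_le [IsFiniteMeasure μ] {Y Z : ℕ → Ω → ℝ}
    {b : ℕ → ℝ}
    (hY : StronglyAdapted ℱ Y) (hZ : StronglyAdapted ℱ Z)
    (hY_int : ∀ n, Integrable (Y n) μ) (hZ_int : ∀ n, Integrable (Z n) μ)
    (hdrift : ∀ n, μ[Y (n + 1)|ℱ n] ≤ᵐ[μ] fun ω => Y n ω + b n - Z n ω) :
    Supermartingale (fun n ω => Y n ω + ∑ j ∈ range n, (Z j ω - b j)) ℱ μ := by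
  have hS_meas : ∀ {n k}, n ≤ k + 1 →
      StronglyMeasurable[ℱ k] fun ω => ∑ j ∈ range n, (Z j ω - b j) := fun hnk =>
    Finset.stronglyMeasurable_fun_sum _ fun j hj =>
      ((hZ j).mono (ℱ.mono (Nat.lt_succ_iff.1 ((mem_range.1 hj).trans_le hnk)))).sub
        stronglyMeasurable_const
  have hS_int : ∀ n, Integrable (fun ω => ∑ j ∈ range n, (Z j ω - b j)) μ := fun n =>
    integrable_finsetSum _ fun j _ => (hZ_int j).sub (integrable_const _)
  refine supermartingale_nat (fun n => (hY n).add (hS_meas n.le_succ))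
    (fun n => (hY_int n).add (hS_int n)) fun n => ?_
  have hS : μ[fun ω => ∑ j ∈ range (n + 1), (Z j ω - b j)|ℱ n] =
      fun ω => ∑ j ∈ range (n + 1), (Z j ω - b j) :=
    condExp_of_stronglyMeasurable (ℱ.le n) (hS_meas le_rfl) (hS_int _)
  filter_upwards [condExp_add (hY_int (n + 1)) (hS_int (n + 1)) (ℱ n), hdrift n]
    with ω hadd hω
  refine hadd.trans_le ?_
  rw [Pi.add_apply, hS]
  simp only [sum_range_succ]
  linarith

theorem ae_tendsto_and_summable_of_condExp_le_add_sub [IsFiniteMeasure μ]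
    {Y Z : ℕ → Ω → ℝ} {b : ℕ → ℝ} (hb_nonneg : ∀ n, 0 ≤ b n) (hb : Summable b)
    (hY : StronglyAdapted ℱ Y) (hZ : StronglyAdapted ℱ Z)
    (hY_int : ∀ n, Integrable (Y n) μ) (hZ_int : ∀ n, Integrable (Z n) μ)
    (hY_nonneg : ∀ n ω, 0 ≤ Y n ω) (hZ_nonneg : ∀ n ω, 0 ≤ Z n ω)
    (hdrift : ∀ n, μ[Y (n + 1)|ℱ n] ≤ᵐ[μ] fun ω => Y n ω + b n - Z n ω) :
    ∀ᵐ ω ∂μ, (∃ c, Tendsto (fun n => Y n ω) atTop (𝓝 c)) ∧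
      Summable fun n => Z n ω := by
  set S := ∑' j, b j
  have hW := (supermartingale_add_sum_of_condExp_le hY hZ hY_int hZ_int hdrift).add_martingale
    (martingale_const ℱ μ S)
  have hW_nonneg : ∀ n ω, 0 ≤ Y n ω + ∑ j ∈ range n, (Z j ω - b j) + S := fun n ω => by
    have hZ_sum : 0 ≤ ∑ j ∈ range n, Z j ω := sum_nonneg fun j _ => hZ_nonneg j ω
    have hb_sum : ∑ j ∈ range n, b j ≤ S := hb.sum_le_tsum _ fun j _ => hb_nonneg j
    rw [sum_sub_distrib]
    linarith [hY_nonneg n ω]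
  filter_upwards [hW.exists_ae_tendsto_of_nonneg hW_nonneg] with ω ⟨c, hc⟩
  have hYZ : Tendsto (fun n => Y n ω + ∑ j ∈ range n, Z j ω) atTop (𝓝 (c - S + S)) := by
    convert (hc.sub_const S).add hb.hasSum.tendsto_sum_nat using 1
    ext n
    simp only [Pi.add_apply, sum_sub_distrib]
    ring
  exact tendsto_and_summable_of_tendsto_add_sum (hY_nonneg · ω) (hZ_nonneg · ω) hYZ

/-- The Robbins–Siegmund theorem. -/
theorem ae_tendsto_and_summable_of_condExp_le [IsFiniteMeasure μ] {Y Z : ℕ → Ω → ℝ}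
    {a b : ℕ → ℝ} (ha_nonneg : ∀ n, 0 ≤ a n) (ha : Summable a)
    (hb_nonneg : ∀ n, 0 ≤ b n) (hb : Summable b)
    (hY : StronglyAdapted ℱ Y) (hZ : StronglyAdapted ℱ Z) (hY_int : ∀ n, Integrable (Y n) μ)
    (hY_nonneg : ∀ n ω, 0 ≤ Y n ω) (hZ_nonneg : ∀ n ω, 0 ≤ Z n ω)
    (hdrift : ∀ n, μ[Y (n + 1)|ℱ n] ≤ᵐ[μ] fun ω => (1 + a n) * Y n ω + b n - Z n ω) :
    ∀ᵐ ω ∂μ, (∃ c, Tendsto (fun n => Y n ω) atTop (𝓝 c)) ∧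
      Summable fun n => Z n ω := by
  have hZ_int : ∀ n, Integrable (Z n) μ := fun n =>
    integrable_of_condExp_le_sub (.of_forall (hY_nonneg (n + 1)))
      (((hY_int n).const_mul _).add (integrable_const (b n)))
      ((hZ n).mono (ℱ.le n)).aestronglyMeasurable (.of_forall (hZ_nonneg n))
      (by filter_upwards [hdrift n] with ω h using h)
  set P : ℕ → ℝ := fun n => ∏ j ∈ range n, (1 + a j)
  have hP_one : ∀ n, 1 ≤ P n := fun n =>
    one_le_prod fun j _ => le_add_of_nonneg_right (ha_nonneg j)
  have hP_pos : ∀ n, 0 < P n := fun n => zero_lt_one.trans_le (hP_one n)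
  have hP_tendsto : Tendsto P atTop (𝓝 (∏' j, (1 + a j))) :=
    (Real.multipliable_one_add_of_summable ha).tendsto_prod_tprod_nat
  obtain ⟨C, hC⟩ := hP_tendsto.bddAbove_range
  have hdrift' : ∀ n, μ[(P (n + 1))⁻¹ • Y (n + 1)|ℱ n] ≤ᵐ[μ]
      fun ω => (P n)⁻¹ * Y n ω + b n / P (n + 1) - Z n ω / P (n + 1) := fun n => by
    filter_upwards [condExp_smul (P (n + 1))⁻¹ (Y (n + 1)) (ℱ n), hdrift n] with ω hsmul h
    have hP_succ : P (n + 1) = P n * (1 + a n) := prod_range_succ _ _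
    have ha_pos : 0 < 1 + a n := by linarith [ha_nonneg n]
    rw [hsmul, Pi.smul_apply, smul_eq_mul]
    calc (P (n + 1))⁻¹ * μ[Y (n + 1)|ℱ n] ω
        ≤ (P (n + 1))⁻¹ * ((1 + a n) * Y n ω + b n - Z n ω) :=
          mul_le_mul_of_nonneg_left h (inv_nonneg.2 (hP_pos _).le)
      _ = (P n)⁻¹ * Y n ω + b n / P (n + 1) - Z n ω / P (n + 1) := by
          rw [hP_succ]
          field_simp [(hP_pos n).ne', ha_pos.ne']
  have hnormalized := ae_tendsto_and_summable_of_condExp_le_add_sub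
    (Y := fun n => (P n)⁻¹ • Y n) (Z := fun n ω => Z n ω / P (n + 1))
    (fun n => div_nonneg (hb_nonneg n) (hP_pos _).le)
    (hb.of_nonneg_of_le (fun n => div_nonneg (hb_nonneg n) (hP_pos _).le)
      fun n => div_le_self (hb_nonneg n) (hP_one _))
    (fun n => (hY n).const_smul _)
    (fun n => ((hZ n).measurable.div_const _).stronglyMeasurable)
    (fun n => (hY_int n).smul _) (fun n => (hZ_int n).div_const _)
    (fun n ω => mul_nonneg (inv_nonneg.2 (hP_pos n).le) (hY_nonneg n ω))
    (fun n ω => div_nonneg (hZ_nonneg n ω) (hP_pos _).le) hdrift'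
  filter_upwards [hnormalized] with ω ⟨⟨c, hc⟩, hsum⟩
  refine ⟨⟨_, (hP_tendsto.mul hc).congr fun n => ?_⟩, ?_⟩
  · simp [mul_inv_cancel_left₀ (hP_pos n).ne']
  · refine (hsum.mul_left C).of_nonneg_of_le (hZ_nonneg · ω) fun n => ?_
    calc Z n ω = P (n + 1) * (Z n ω / P (n + 1)) := (mul_div_cancel₀ _ (hP_pos _).ne').symm
      _ ≤ C * (Z n ω / P (n + 1)) :=
        mul_le_mul_of_nonneg_right (hC ⟨_, rfl⟩) (div_nonneg (hZ_nonneg n ω) (hP_pos _).le)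

end Martingale

section Lyapunov

variable {E : Type*} [PseudoMetricSpace E] {B : Set E} {V φ : ℕ → E → ℝ} {y : ℕ → E}

theorem frequently_infDist_lt_of_summable_mul {α : ℕ → ℝ}
    (hφ : ∀ ε > (0 : ℝ), ∃ c > (0 : ℝ), ∀ i y, ε ≤ Metric.infDist y B → c ≤ φ i y)
    (hα : ∀ n, 0 ≤ α n) (hα_div : Tendsto (fun n => ∑ i ∈ range n, α i) atTop atTop)
    (hsum : Summable fun n => α n * φ n (y n)) {ε : ℝ} (hε : 0 < ε) :
    ∃ᶠ n in atTop, Metric.infDist (y n) B < ε := by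
  obtain ⟨c, hc, hφc⟩ := hφ ε hε
  refine (frequently_lt_of_summable_mul hα hα_div hsum hc).mono fun n hn => ?_
  by_contra! h
  exact (hφc n _ h).not_gt hn

theorem eq_zero_of_tendsto_of_frequently_infDist_lt {L : ℝ}
    (hV : ∀ δ > (0 : ℝ), ∃ ε > (0 : ℝ), ∀ i y, Metric.infDist y B < ε → V i y < δ)
    (hfreq : ∀ ε > (0 : ℝ), ∃ᶠ n in atTop, Metric.infDist (y n) B < ε)
    (hV_nonneg : ∀ i y, 0 ≤ V i y) (hL : Tendsto (fun n => V n (y n)) atTop (𝓝 L)) :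
    L = 0 := by
  refine le_antisymm (le_of_forall_pos_le_add fun δ hδ => ?_)
    (ge_of_tendsto' hL fun n => hV_nonneg _ _)
  obtain ⟨ε, hε, hVε⟩ := hV δ hδ
  rw [zero_add]
  exact le_of_tendsto_of_frequently hL <| (hfreq ε hε).mono fun n hn => (hVε n _ hn).le

theorem tendsto_infDist_of_tendsto_zero
    (hV : ∀ ε > (0 : ℝ), ∃ c > (0 : ℝ), ∀ i y, ε ≤ Metric.infDist y B → c ≤ V i y)
    (h : Tendsto (fun n => V n (y n)) atTop (𝓝 0)) :
    Tendsto (fun n => Metric.infDist (y n) B) atTop (𝓝 0) := by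
  refine tendsto_order.2 ⟨fun a ha => .of_forall fun n => ha.trans_le Metric.infDist_nonneg,
    fun ε hε => ?_⟩
  obtain ⟨c, hc, hVc⟩ := hV ε hε
  filter_upwards [h.eventually (eventually_lt_nhds hc)] with n hn
  by_contra! h
  exact (hVc n _ h).not_gt hn

end Lyapunov

theorem stmt_0_general {N : ℕ}
    (B : Set (EuclideanSpace ℝ (Fin N)))
    (V φ : ℕ → EuclideanSpace ℝ (Fin N) → ℝ)
    (hVmeas : ∀ i, Measurable (V i)) (hφmeas : ∀ i, Measurable (φ i))
    (hVnn : ∀ i y, 0 ≤ V i y) (hφnn : ∀ i y, 0 ≤ φ i y)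
    -- (i) : inf of `V` away from `B` is positive
    (hVinf : ∀ ε > (0 : ℝ), ∃ c > (0 : ℝ), ∀ i y, ε ≤ Metric.infDist y B → c ≤ V i y)
    -- (iii) : `sup_i V(i, ·)` is small near `B`
    (hVcont : ∀ δ > (0 : ℝ), ∃ ε > (0 : ℝ), ∀ i y, Metric.infDist y B < ε → V i y < δ)
    -- inf of `φ` away from `B` is positive
    (hφinf : ∀ ε > (0 : ℝ), ∃ c > (0 : ℝ), ∀ i y, ε ≤ Metric.infDist y B → c ≤ φ i y)
    (α g : ℕ → ℝ) (hα_pos : ∀ i, 0 < α i)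
    (hα_div : Tendsto (fun n => ∑ i ∈ Finset.range n, α i) atTop atTop)
    (hg_pos : ∀ i, 0 < g i) (hg_sum : Summable g)
    {Ω : Type} [mΩ : MeasurableSpace Ω] (Pr : Measure Ω) [IsProbabilityMeasure Pr]
    (ℱ : Filtration ℕ mΩ) (x : ℕ → Ω → EuclideanSpace ℝ (Fin N))
    (hadapted : ∀ i, Measurable[ℱ i] (x i))
    (hint : ∀ i, Integrable (fun ω => V i (x i ω)) Pr)
    (hdrift : ∀ i, ∀ᵐ ω ∂Pr,
      (Pr[fun ω' => V (i + 1) (x (i + 1) ω') | ℱ i]) ω - V i (x i ω) ≤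
        g i * (1 + V i (x i ω)) - α i * φ i (x i ω)) :
    ∀ᵐ ω ∂Pr, Tendsto (fun i => Metric.infDist (x i ω) B) atTop (nhds 0) := by
  have hα_nonneg : ∀ i, 0 ≤ α i := fun i => (hα_pos i).le
  have hconv := ae_tendsto_and_summable_of_condExp_le (μ := Pr) (ℱ := ℱ)
    (Y := fun i ω => V i (x i ω)) (Z := fun i ω => α i * φ i (x i ω))
    (fun i => (hg_pos i).le) hg_sum (fun i => (hg_pos i).le) hg_sum
    (fun i => ((hVmeas i).comp (hadapted i)).stronglyMeasurable)
    (fun i => (((hφmeas i).comp (hadapted i)).const_mul (α i)).stronglyMeasurable)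
    hint (fun i ω => hVnn _ _) (fun i ω => mul_nonneg (hα_nonneg i) (hφnn _ _))
    fun i => by filter_upwards [hdrift i] with ω h using by linarith
  filter_upwards [hconv] with ω ⟨⟨L, hL⟩, hsum⟩
  have hL_zero : L = 0 := eq_zero_of_tendsto_of_frequently_infDist_lt hVcont
    (fun ε hε => frequently_infDist_lt_of_summable_mul hφinf hα_nonneg hα_div hsum hε) hVnn hL
  exact tendsto_infDist_of_tendsto_zero hVinf (hL_zero ▸ hL)

/-- Convergence of Markov/adapted processes via a stochastic Lyapunov (potential) function:
if `V(i, x(i))` is integrable with supermartingale-like drift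
`𝔼[V(i+1, x(i+1)) | ℱ_i] − V(i, x(i)) ≤ g(i)(1 + V(i, x(i))) − α(i) φ(i, x(i))`,
then `ρ(x(i), B) → 0` almost surely. -/
theorem stmt_0 {N : ℕ} (hN : 1 ≤ N)
    (B : Set (EuclideanSpace ℝ (Fin N))) (hBne : B.Nonempty) (hBcl : IsClosed B)
    (V φ : ℕ → EuclideanSpace ℝ (Fin N) → ℝ)
    (hVmeas : ∀ i, Measurable (V i)) (hφmeas : ∀ i, Measurable (φ i))
    (hVnn : ∀ i y, 0 ≤ V i y) (hφnn : ∀ i y, 0 ≤ φ i y)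
    -- (i) : inf of `V` away from `B` is positive
    (hVinf : ∀ ε > (0 : ℝ), ∃ c > (0 : ℝ), ∀ i y, ε ≤ Metric.infDist y B → c ≤ V i y)
    -- (ii) : `V` vanishes on `B`
    (hVB : ∀ i, ∀ y ∈ B, V i y = 0)
    -- (iii) : `sup_i V(i, ·)` is small near `B`
    (hVcont : ∀ δ > (0 : ℝ), ∃ ε > (0 : ℝ), ∀ i y, Metric.infDist y B < ε → V i y < δ)
    -- inf of `φ` away from `B` is positive
    (hφinf : ∀ ε > (0 : ℝ), ∃ c > (0 : ℝ), ∀ i y, ε ≤ Metric.infDist y B → c ≤ φ i y)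
    (α g : ℕ → ℝ) (hα_pos : ∀ i, 0 < α i)
    (hα_div : Tendsto (fun n => ∑ i ∈ Finset.range n, α i) atTop atTop)
    (hg_pos : ∀ i, 0 < g i) (hg_sum : Summable g)
    {Ω : Type} [mΩ : MeasurableSpace Ω] (Pr : Measure Ω) [IsProbabilityMeasure Pr]
    (ℱ : Filtration ℕ mΩ) (x : ℕ → Ω → EuclideanSpace ℝ (Fin N))
    (hadapted : ∀ i, Measurable[ℱ i] (x i))
    (hint : ∀ i, Integrable (fun ω => V i (x i ω)) Pr)
    (hdrift : ∀ i, ∀ᵐ ω ∂Pr,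
      (Pr[fun ω' => V (i + 1) (x (i + 1) ω') | ℱ i]) ω - V i (x i ω) ≤
        g i * (1 + V i (x i ω)) - α i * φ i (x i ω)) :
    ∀ᵐ ω ∂Pr, Tendsto (fun i => Metric.infDist (x i ω) B) atTop (nhds 0) :=
  stmt_0_general B V φ hVmeas hφmeas hVnn hφnn hVinf hVcont hφinf α g hα_pos hα_div hg_pos hg_sum
    (mΩ := mΩ) Pr ℱ x hadapted hint hdrift
end

section
/- In the QC model, for arbitrary deterministic initial condition x(0) ∈ ℝ^N, the state sequence converges almost surely to the consensus subspace: ℙ[lim_{i→∞} ρ(x(i), 𝒞) = 0] = 1, where ρ(y, 𝒞) = inf_{z∈𝒞} ‖y − z‖ (equivalently, ‖x(i)_{𝒞⊥}‖ → 0 almost surely). -/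
/-!
Write `V(i) = ‖x(i)_{𝒞⊥}‖²`. Since `L(i)𝟏 = 0` and `‖L(i)y‖ ≤ (λ_N + 2N)‖y‖` on `𝒞⊥`, one step
of the recursion gives pathwise
`V(i+1) ≤ (1 + a(i)) V(i) - 2α(i) x(i)_{𝒞⊥}ᵀ (L(i)x(i) + Υ(i) + Ψ(i)) + 3α(i)²(‖Υ(i)‖² + ‖Ψ(i)‖²)`
with `a(i) = 3α(i)²(λ_N + 2N)²`. Conditionally on `ℱ_i` the step randomness is independent of
`x(i)`, so the cross term averages to `x_{𝒞⊥}ᵀ L̄ x_{𝒞⊥} ≥ λ₂ V(i)` and the noise term to at most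
`MΔ²/3`; hence `𝔼[V(i+1) | ℱ_i] ≤ (1 + a(i)) V(i) - 2λ₂α(i)V(i) + α(i)²MΔ²`, with `∑ a, ∑ α² < ∞`.
By the Robbins–Siegmund theorem (the discounted process
`∏_{j<n}(1 + a(j))⁻¹ V(n) + ∑_{j<n} ∏_{k≤j}(1 + a(k))⁻¹ (2λ₂α(j)V(j) - α(j)²MΔ²)`
is a supermartingale bounded below, hence converges), `V(i)` converges and `∑ α(i)V(i) < ∞` almost surely; as
`∑ α(i) = ∞`, the limit is `0`.
-/

open MeasureTheory ProbabilityTheory Filter Finset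

noncomputable section

/-- Euclidean norm on `Fin N → ℝ`. -/
def euclNorm {N : ℕ} (y : Fin N → ℝ) : ℝ := Real.sqrt (∑ n, (y n) ^ 2)

/-- Quadratic form `yᵀ A y`. -/
def quadForm {N : ℕ} (A : Matrix (Fin N) (Fin N) ℝ) (y : Fin N → ℝ) : ℝ :=
  ∑ n, y n * A.mulVec y n

/-- Componentwise average `(1/N) 𝟏ᵀ y`. -/
def avgOf {N : ℕ} (y : Fin N → ℝ) : ℝ := (∑ n, y n) / N

/-- Orthogonal projection of `y` onto the orthogonal complement of the consensus
subspace `𝒞 = {a𝟏 : a ∈ ℝ}`. -/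
def perpOf {N : ℕ} (y : Fin N → ℝ) : Fin N → ℝ := fun n => y n - avgOf y

/-- The sequence `g(i) = α(i)² max(λ_N³/λ₂ + 4N²λ_N/λ₂, 2MΔ²λ_N/3)`. -/
def gseq (N M : ℕ) (Δ lam2 lamN : ℝ) (α : ℕ → ℝ) (i : ℕ) : ℝ :=
  α i ^ 2 * max (lamN ^ 3 / lam2 + 4 * N ^ 2 * lamN / lam2) (2 * M * Δ ^ 2 * lamN / 3)

/-- The QC (dithered quantized consensus with random link failures) model. -/
structure QCModel (N : ℕ) (Δ : ℝ) (M : ℕ) (α : ℕ → ℝ)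
    (Lbar : Matrix (Fin N) (Fin N) ℝ) (lam2 lamN : ℝ)
    {Ω : Type} [mΩ : MeasurableSpace Ω] (Pr : Measure Ω)
    (x0 : Fin N → ℝ)
    (x : ℕ → Ω → Fin N → ℝ)
    (L : ℕ → Ω → Matrix (Fin N) (Fin N) ℝ)
    (Υ Ψ : ℕ → Ω → Fin N → ℝ)
    (ℱ : Filtration ℕ mΩ) : Prop where
  hprob : IsProbabilityMeasure Pr
  hN : 2 ≤ N
  hΔ : 0 < Δ
  hM : 1 ≤ M
  hα_pos : ∀ i, 0 < α i
  hα_div : Tendsto (fun n => ∑ i ∈ Finset.range n, α i) atTop atTop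
  hα_sq : Summable fun i => α i ^ 2
  hLbar_symm : Lbar.IsSymm
  hLbar_psd : Lbar.PosSemidef
  hLbar_one : Lbar.mulVec 1 = 0
  hlam2_pos : 0 < lam2
  hlam_le : lam2 ≤ lamN
  hspec_lo : ∀ y : Fin N → ℝ, ∑ n, y n = 0 → lam2 * euclNorm y ^ 2 ≤ quadForm Lbar y
  hspec_hi : ∀ y : Fin N → ℝ, ∑ n, y n = 0 → quadForm Lbar y ≤ lamN * euclNorm y ^ 2
  hx0 : ∀ ω, x 0 ω = x0
  hL_meas : ∀ i n m, Measurable fun ω => L i ω n m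
  hΥ_meas : ∀ i, Measurable (Υ i)
  hΨ_meas : ∀ i, Measurable (Ψ i)
  hL_symm : ∀ i ω, (L i ω).IsSymm
  hL_one : ∀ i, ∀ᵐ ω ∂Pr, (L i ω).mulVec 1 = 0
  hL_mean : ∀ i n m, ∫ ω, L i ω n m ∂Pr = Lbar n m
  hL_op : ∀ i, ∀ᵐ ω ∂Pr, ∀ y : Fin N → ℝ,
    euclNorm ((L i ω - Lbar).mulVec y) ≤ 2 * N * euclNorm y
  hΥ_L2 : ∀ i, MemLp (Υ i) 2 Pr
  hΨ_L2 : ∀ i, MemLp (Ψ i) 2 Pr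
  hΥ_mean : ∀ i n, ∫ ω, Υ i ω n ∂Pr = 0
  hΨ_mean : ∀ i n, ∫ ω, Ψ i ω n ∂Pr = 0
  hvar_eq : ∀ i, ∫ ω, euclNorm (Υ i ω) ^ 2 ∂Pr = ∫ ω, euclNorm (Ψ i ω) ^ 2 ∂Pr
  hvar_le : ∀ i, ∫ ω, euclNorm (Υ i ω) ^ 2 ∂Pr ≤ M * Δ ^ 2 / 6
  hℱ : ∀ i, ℱ i = ⨆ j ∈ Set.Iio i,
      (MeasurableSpace.comap (fun ω n m => L j ω n m) inferInstance ⊔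
       MeasurableSpace.comap (Υ j) inferInstance ⊔
       MeasurableSpace.comap (Ψ j) inferInstance)
  hindep : ∀ i, iIndep
      ![MeasurableSpace.comap (fun ω n m => L i ω n m) inferInstance,
        MeasurableSpace.comap (Υ i) inferInstance,
        MeasurableSpace.comap (Ψ i) inferInstance,
        ℱ i] Pr
  hrec : ∀ i ω, x (i + 1) ω = x i ω - α i • ((L i ω).mulVec (x i ω) + Υ i ω + Ψ i ω)

open Matrix
open scoped Topology

section Discount

variable {a : ℕ → ℝ}

def discount (a : ℕ → ℝ) (n : ℕ) : ℝ := ∏ j ∈ range n, (1 + a j)⁻¹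

lemma discount_succ (n : ℕ) : discount a (n + 1) = discount a n * (1 + a n)⁻¹ :=
  prod_range_succ _ _

lemma discount_pos (ha : ∀ n, 0 ≤ a n) (n : ℕ) : 0 < discount a n :=
  prod_pos fun j _ => inv_pos.2 (by linarith [ha j])

lemma discount_le_one (ha : ∀ n, 0 ≤ a n) (n : ℕ) : discount a n ≤ 1 :=
  prod_le_one (fun j _ => (inv_pos.2 (by linarith [ha j])).le)
    fun j _ => inv_le_one_of_one_le₀ (by linarith [ha j])

lemma discount_antitone (ha : ∀ n, 0 ≤ a n) : Antitone (discount a) :=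
  antitone_nat_of_succ_le fun n => by
    rw [discount_succ]
    exact mul_le_of_le_one_right (discount_pos ha n).le
      (inv_le_one_of_one_le₀ (by linarith [ha n]))

lemma exp_neg_tsum_le_discount (ha : ∀ n, 0 ≤ a n) (hs : Summable a) (n : ℕ) :
    Real.exp (-∑' j, a j) ≤ discount a n := by
  rw [discount, prod_inv_distrib, Real.exp_neg]
  refine inv_anti₀ (prod_pos fun j _ => by linarith [ha j]) ?_
  calc ∏ j ∈ range n, (1 + a j) ≤ ∏ j ∈ range n, Real.exp (a j) :=
        prod_le_prod (fun j _ => by linarith [ha j]) fun j _ => by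
          linarith [Real.add_one_le_exp (a j)]
    _ = Real.exp (∑ j ∈ range n, a j) := (Real.exp_sum _ _).symm
    _ ≤ Real.exp (∑' j, a j) := Real.exp_le_exp.2 (hs.sum_le_tsum _ fun j _ => ha j)

lemma exists_tendsto_discount (ha : ∀ n, 0 ≤ a n) (hs : Summable a) :
    ∃ D, 0 < D ∧ Tendsto (discount a) atTop (𝓝 D) := by
  obtain ⟨D, hD⟩ : ∃ D, Tendsto (discount a) atTop (𝓝 D) :=
    (tendsto_atTop_of_antitone (discount_antitone ha)).resolve_left fun hbot =>
      (hbot.eventually_lt_atBot 0).exists.elim fun n hn => (discount_pos ha n).not_gt hn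
  exact ⟨D, (Real.exp_pos _).trans_le (ge_of_tendsto' hD (exp_neg_tsum_le_discount ha hs)), hD⟩

end Discount

lemma tendsto_and_summable_of_tendsto_discounted {a b c V : ℕ → ℝ} {u : ℝ}
    (ha0 : ∀ n, 0 ≤ a n) (ha : Summable a) (hb0 : ∀ n, 0 ≤ b n) (hc0 : ∀ n, 0 ≤ c n)
    (hc : Summable c) (hV0 : ∀ n, 0 ≤ V n)
    (hU : Tendsto (fun n => discount a n * V n +
      ∑ j ∈ range n, discount a (j + 1) * (b j - c j)) atTop (𝓝 u)) :
    (∃ v, Tendsto V atTop (𝓝 v)) ∧ Summable b := by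
  set D := discount a
  obtain ⟨Dlim, hDlim, hD⟩ := exists_tendsto_discount ha0 ha
  have hDpos := discount_pos ha0
  have hDge : ∀ n, Dlim ≤ D n := (discount_antitone ha0).le_of_tendsto hD
  have hDc : Summable fun j => D (j + 1) * c j :=
    hc.of_nonneg_of_le (fun j => mul_nonneg (hDpos _).le (hc0 j))
      fun j => mul_le_of_le_one_left (hc0 j) (discount_le_one ha0 _)
  have hW : Tendsto (fun n => ∑ j ∈ range n, D (j + 1) * b j + D n * V n) atTop
      (𝓝 (u + ∑' j, D (j + 1) * c j)) :=
    (hU.add hDc.hasSum.tendsto_sum_nat).congr fun n => by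
      simp only [mul_sub, sum_sub_distrib]; ring
  have hDb0 : ∀ j, 0 ≤ D (j + 1) * b j := fun j => mul_nonneg (hDpos _).le (hb0 j)
  obtain ⟨B, hB⟩ := hW.bddAbove_range
  have hDb : Summable fun j => D (j + 1) * b j :=
    summable_of_sum_range_le hDb0 fun n =>
      (le_add_of_nonneg_right (mul_nonneg (hDpos n).le (hV0 n))).trans (hB ⟨n, rfl⟩)
  refine ⟨?_, ?_⟩
  · have hDV := hW.sub hDb.hasSum.tendsto_sum_nat
    refine ⟨_, (hDV.div hD hDlim.ne').congr fun n => ?_⟩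
    simp only [add_sub_cancel_left, Pi.div_apply]
    exact mul_div_cancel_left₀ _ (hDpos n).ne'
  · refine (hDb.div_const Dlim).of_nonneg_of_le hb0 fun j => ?_
    rw [le_div_iff₀ hDlim, mul_comm]
    exact mul_le_mul_of_nonneg_right (hDge _) (hb0 j)

lemma eq_zero_of_tendsto_of_summable_mul {α V : ℕ → ℝ} {v : ℝ} (hα0 : ∀ n, 0 ≤ α n)
    (hα : Tendsto (fun n => ∑ i ∈ range n, α i) atTop atTop) (hV : Tendsto V atTop (𝓝 v))
    (hV0 : ∀ n, 0 ≤ V n) (hαV : Summable fun n => α n * V n) : v = 0 := by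
  have hv : 0 ≤ v := ge_of_tendsto' hV hV0
  refine (hv.eq_or_lt.resolve_right fun hv => ?_).symm
  have hsum : Summable α := by
    refine (hαV.mul_left (2 / v)).of_norm_bounded_eventually_nat ?_
    filter_upwards [hV.eventually (lt_mem_nhds (half_lt_self hv))] with n hn
    rw [Real.norm_of_nonneg (hα0 n)]
    calc α n = 2 / v * (α n * (v / 2)) := by field_simp
      _ ≤ 2 / v * (α n * V n) := by gcongr; exact hα0 n
  exact not_tendsto_atTop_of_tendsto_nhds hsum.hasSum.tendsto_sum_nat hα

section RobbinsSiegmund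

variable {Ω : Type*} {m0 : MeasurableSpace Ω} {μ : Measure Ω} [IsFiniteMeasure μ]
  {ℱ : Filtration ℕ m0}

lemma MeasureTheory.Supermartingale.exists_ae_tendsto_of_bddBelow {f : ℕ → Ω → ℝ} {K : ℝ}
    (hf : Supermartingale f ℱ μ) (hK : ∀ n ω, K ≤ f n ω) :
    ∀ᵐ ω ∂μ, ∃ c, Tendsto (fun n => f n ω) atTop (𝓝 c) := by
  have hbdd : ∀ n, eLpNorm ((-f) n) 1 μ ≤
      ENNReal.ofReal (∫ ω, f 0 ω ∂μ + ∫ _, 2 * |K| ∂μ) := fun n => by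
    have hfn := hf.integrable n
    rw [Pi.neg_apply, eLpNorm_neg, eLpNorm_one_eq_lintegral_enorm,
      ← ofReal_integral_norm_eq_lintegral_enorm hfn]
    refine ENNReal.ofReal_le_ofReal ((integral_mono hfn.norm
      (hfn.add (integrable_const (2 * |K|))) fun ω => ?_).trans ?_)
    · have := hK n ω
      rw [Pi.add_apply, Real.norm_eq_abs, abs_le]
      constructor <;> cases abs_cases K <;> linarith
    · rw [integral_add' hfn (integrable_const _)]
      simpa using hf.setIntegral_le (Nat.zero_le n) MeasurableSet.univ
  filter_upwards [hf.neg.exists_ae_tendsto_of_bdd hbdd] with ω ⟨c, hc⟩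
  exact ⟨-c, by simpa using hc.neg⟩

def robbinsSiegmundProcess (a c : ℕ → ℝ) (V b : ℕ → Ω → ℝ) (n : ℕ) (ω : Ω) : ℝ :=
  discount a n * V n ω + ∑ j ∈ range n, discount a (j + 1) * (b j ω - c j)

variable {a c : ℕ → ℝ} {V b : ℕ → Ω → ℝ}

lemma neg_tsum_le_robbinsSiegmundProcess (ha0 : ∀ n, 0 ≤ a n) (hc0 : ∀ n, 0 ≤ c n)
    (hc : Summable c) (hV0 : ∀ n ω, 0 ≤ V n ω) (hb0 : ∀ n ω, 0 ≤ b n ω) (n : ℕ) (ω : Ω) :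
    -∑' j, c j ≤ robbinsSiegmundProcess a c V b n ω := by
  have hterm : ∀ j ∈ range n, -c j ≤ discount a (j + 1) * (b j ω - c j) := fun j _ => by
    have hD0 := (discount_pos ha0 (j + 1)).le
    nlinarith [discount_le_one ha0 (j + 1), mul_nonneg hD0 (hb0 j ω), hc0 j]
  calc -∑' j, c j ≤ -∑ j ∈ range n, c j := neg_le_neg (hc.sum_le_tsum _ fun j _ => hc0 j)
    _ = ∑ j ∈ range n, -c j := by rw [sum_neg_distrib]
    _ ≤ ∑ j ∈ range n, discount a (j + 1) * (b j ω - c j) := sum_le_sum hterm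
    _ ≤ robbinsSiegmundProcess a c V b n ω :=
      le_add_of_nonneg_left (mul_nonneg (discount_pos ha0 n).le (hV0 n ω))

lemma supermartingale_robbinsSiegmundProcess (hV : StronglyAdapted ℱ V)
    (hb : StronglyAdapted ℱ b) (hVi : ∀ n, Integrable (V n) μ) (hbi : ∀ n, Integrable (b n) μ)
    (ha0 : ∀ n, 0 ≤ a n)
    (hstep : ∀ n, μ[V (n + 1)|ℱ n] ≤ᵐ[μ] fun ω => (1 + a n) * V n ω - b n ω + c n) :
    Supermartingale (robbinsSiegmundProcess a c V b) ℱ μ := by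
  set S : ℕ → Ω → ℝ := fun n ω => ∑ j ∈ range n, discount a (j + 1) * (b j ω - c j)
  have hSm : ∀ n k, n ≤ k + 1 → StronglyMeasurable[ℱ k] (S n) := fun n k hnk =>
    Finset.stronglyMeasurable_fun_sum _ fun j hj =>
      (((hb j).mono (ℱ.mono (by rw [mem_range] at hj; omega))).sub
        stronglyMeasurable_const).const_mul _
  have hSi : ∀ n, Integrable (S n) μ := fun n =>
    integrable_finsetSum _ fun j _ => (((hbi j).sub (integrable_const _)).const_mul _)
  have hU : ∀ n, robbinsSiegmundProcess a c V b n = discount a n • V n + S n := fun n => rfl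
  refine supermartingale_nat (fun n => ?_) (fun n => ?_) fun n => ?_
  · rw [hU]; exact ((hV n).const_smul _).add (hSm n n (by omega))
  · rw [hU]; exact ((hVi n).smul _).add (hSi n)
  · rw [hU, hU]
    have hD : discount a (n + 1) * (1 + a n) = discount a n := by
      rw [discount_succ, mul_assoc, inv_mul_cancel₀ (by linarith [ha0 n]), mul_one]
    filter_upwards [condExp_add ((hVi (n + 1)).smul (discount a (n + 1))) (hSi (n + 1)) (ℱ n),
      condExp_smul (m := ℱ n) (μ := μ) (discount a (n + 1)) (V (n + 1)), hstep n]
      with ω hadd hsmul hstep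
    rw [hadd, Pi.add_apply, hsmul,
      condExp_of_stronglyMeasurable (ℱ.le n) (hSm _ n le_rfl) (hSi _)]
    simp only [Pi.smul_apply, smul_eq_mul, Pi.add_apply, S, sum_range_succ]
    linarith [mul_le_mul_of_nonneg_left hstep (discount_pos ha0 (n + 1)).le,
      congrArg (· * V n ω) hD]

theorem ae_tendsto_and_summable_of_condExp_le_s2 (hV : StronglyAdapted ℱ V)
    (hb : StronglyAdapted ℱ b) (hVi : ∀ n, Integrable (V n) μ) (hbi : ∀ n, Integrable (b n) μ)
    (hV0 : ∀ n ω, 0 ≤ V n ω) (hb0 : ∀ n ω, 0 ≤ b n ω) (ha0 : ∀ n, 0 ≤ a n) (ha : Summable a)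
    (hc0 : ∀ n, 0 ≤ c n) (hc : Summable c)
    (hstep : ∀ n, μ[V (n + 1)|ℱ n] ≤ᵐ[μ] fun ω => (1 + a n) * V n ω - b n ω + c n) :
    ∀ᵐ ω ∂μ, (∃ v, Tendsto (fun n => V n ω) atTop (𝓝 v)) ∧ Summable fun n => b n ω := by
  filter_upwards [(supermartingale_robbinsSiegmundProcess hV hb hVi hbi ha0
    hstep).exists_ae_tendsto_of_bddBelow (neg_tsum_le_robbinsSiegmundProcess ha0 hc0 hc hV0 hb0)]
    with ω ⟨u, hu⟩
  exact tendsto_and_summable_of_tendsto_discounted ha0 ha (fun n => hb0 n ω) hc0 hc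
    (fun n => hV0 n ω) hu

end RobbinsSiegmund

section IndepCondExp

variable {Ω : Type*} {m m' m0 : MeasurableSpace Ω} {μ : Measure Ω}

lemma MeasureTheory.MemLp.integrable_dotProduct_self {N : ℕ} {Z : Ω → Fin N → ℝ}
    (hZ : MemLp Z 2 μ) : Integrable (fun ω => Z ω ⬝ᵥ Z ω) μ :=
  integrable_finsetSum univ fun n _ =>
    (memLp_pi_iff.1 hZ n).integrable_mul (memLp_pi_iff.1 hZ n)

variable [IsFiniteMeasure μ]

lemma condExp_mul_ae_eq_of_indep (hm : m ≤ m0) (hm' : m' ≤ m0) (hind : Indep m' m μ)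
    {f g : Ω → ℝ} (hf : StronglyMeasurable[m] f) (hg : StronglyMeasurable[m'] g)
    (hfg : Integrable (f * g) μ) (hgi : Integrable g μ) :
    μ[f * g|m] =ᵐ[μ] fun ω => f ω * ∫ ω', g ω' ∂μ := by
  filter_upwards [condExp_mul_of_stronglyMeasurable_left hf hfg hgi,
    condExp_indep_eq hm' hm hg hind] with ω h1 h2
  rw [h1, Pi.mul_apply, h2]

lemma condExp_sum_mul_ae_eq_of_indep (hm : m ≤ m0) (hm' : m' ≤ m0) (hind : Indep m' m μ)
    {ι : Type*} (s : Finset ι) {f g : ι → Ω → ℝ} (hf : ∀ k, StronglyMeasurable[m] (f k))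
    (hg : ∀ k, StronglyMeasurable[m'] (g k)) (hfg : ∀ k, Integrable (f k * g k) μ)
    (hgi : ∀ k, Integrable (g k) μ) :
    μ[fun ω => ∑ k ∈ s, f k ω * g k ω|m] =ᵐ[μ] fun ω => ∑ k ∈ s, f k ω * ∫ ω', g k ω' ∂μ := by
  have hsum : (fun ω => ∑ k ∈ s, f k ω * g k ω) = ∑ k ∈ s, f k * g k := by
    ext ω; simp [Finset.sum_apply]
  rw [hsum]
  refine (condExp_finsetSum (fun k _ => hfg k) m).trans ?_
  refine (eventuallyEq_sum fun k _ => condExp_mul_ae_eq_of_indep hm hm' hind (hf k) (hg k)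
    (hfg k) (hgi k)).trans (Eventually.of_forall fun ω => ?_)
  simp [Finset.sum_apply]

end IndepCondExp

section ConsensusGeometry

variable {N : ℕ}

lemma euclNorm_sq_eq_dotProduct (y : Fin N → ℝ) : euclNorm y ^ 2 = y ⬝ᵥ y := by
  rw [euclNorm, Real.sq_sqrt (by positivity)]
  simp only [dotProduct, sq]

lemma euclNorm_add_le (y z : Fin N → ℝ) : euclNorm (y + z) ≤ euclNorm y + euclNorm z := by
  have h : ∀ y : Fin N → ℝ, euclNorm y = ‖WithLp.toLp 2 y‖ := fun y => by
    simp [euclNorm, EuclideanSpace.norm_eq]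
  simpa only [h, WithLp.toLp_add] using norm_add_le (WithLp.toLp 2 y) (WithLp.toLp 2 z)

lemma abs_le_euclNorm (y : Fin N → ℝ) (n : Fin N) : |y n| ≤ euclNorm y :=
  Real.abs_le_sqrt (single_le_sum (f := fun m => y m ^ 2) (fun _ _ => sq_nonneg _) (mem_univ n))

lemma euclNorm_single_one (m : Fin N) : euclNorm (Pi.single m (1 : ℝ)) = 1 := by
  simp [euclNorm, Pi.single_apply]

lemma perpOf_eq_sub (y : Fin N → ℝ) : perpOf y = y - avgOf y • 1 := by
  ext n; simp [perpOf]

lemma sum_perpOf (y : Fin N → ℝ) : ∑ n, perpOf y n = 0 := by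
  rcases N.eq_zero_or_pos with rfl | hN
  · simp
  simp only [perpOf, avgOf, sum_sub_distrib, sum_const, card_univ, Fintype.card_fin, nsmul_eq_mul]
  field_simp
  ring

lemma dotProduct_perpOf {p : Fin N → ℝ} (hp : ∑ n, p n = 0) (w : Fin N → ℝ) :
    p ⬝ᵥ perpOf w = p ⬝ᵥ w := by
  rw [perpOf_eq_sub, dotProduct_sub, dotProduct_smul, dotProduct_one, hp, smul_zero, sub_zero]

lemma perpOf_sub_smul (y w : Fin N → ℝ) (t : ℝ) :
    perpOf (y - t • w) = perpOf y - t • perpOf w := by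
  ext n
  simp only [perpOf, avgOf, Pi.sub_apply, Pi.smul_apply, smul_eq_mul, sum_sub_distrib, ← mul_sum]
  ring

lemma perpOf_dotProduct_self_le (w : Fin N → ℝ) : perpOf w ⬝ᵥ perpOf w ≤ w ⬝ᵥ w := by
  rw [dotProduct_perpOf (sum_perpOf w), perpOf_eq_sub, sub_dotProduct, smul_dotProduct,
    one_dotProduct, smul_eq_mul, avgOf]
  have : 0 ≤ (∑ n, w n) / N * ∑ n, w n := by
    rw [div_mul_eq_mul_div]; exact div_nonneg (mul_self_nonneg _) N.cast_nonneg
  linarith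

lemma mulVec_perpOf {A : Matrix (Fin N) (Fin N) ℝ} (hA : A *ᵥ 1 = 0) (y : Fin N → ℝ) :
    A *ᵥ perpOf y = A *ᵥ y := by
  rw [perpOf_eq_sub, Matrix.mulVec_sub, Matrix.mulVec_smul, hA, smul_zero, sub_zero]

lemma add_add_dotProduct_self_le (u v w : Fin N → ℝ) :
    (u + v + w) ⬝ᵥ (u + v + w) ≤ 3 * (u ⬝ᵥ u + v ⬝ᵥ v + w ⬝ᵥ w) := by
  simp only [dotProduct, mul_sum, ← sum_add_distrib, Pi.add_apply]
  exact sum_le_sum fun n _ => by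
    nlinarith [sq_nonneg (u n - v n), sq_nonneg (v n - w n), sq_nonneg (u n - w n)]

def sqDistConsensus (y : Fin N → ℝ) : ℝ := perpOf y ⬝ᵥ perpOf y

lemma sqDistConsensus_nonneg (y : Fin N → ℝ) : 0 ≤ sqDistConsensus y := by
  rw [sqDistConsensus, ← euclNorm_sq_eq_dotProduct]; positivity

lemma euclNorm_perpOf (y : Fin N → ℝ) : euclNorm (perpOf y) = √(sqDistConsensus y) := by
  simp only [euclNorm, sqDistConsensus, dotProduct, sq]

lemma sqDistConsensus_sub_smul_le (y w : Fin N → ℝ) (t : ℝ) :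
    sqDistConsensus (y - t • w) ≤
      sqDistConsensus y - 2 * t * (perpOf y ⬝ᵥ w) + t ^ 2 * (w ⬝ᵥ w) := by
  have hcross : perpOf y ⬝ᵥ perpOf w = perpOf y ⬝ᵥ w := dotProduct_perpOf (sum_perpOf y) w
  have hexpand : sqDistConsensus (y - t • w) =
      sqDistConsensus y - 2 * t * (perpOf y ⬝ᵥ w) + t ^ 2 * sqDistConsensus w := by
    rw [sqDistConsensus, sqDistConsensus, sqDistConsensus, perpOf_sub_smul, ← hcross]
    simp only [sub_dotProduct, dotProduct_sub, smul_dotProduct, dotProduct_smul, smul_eq_mul,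
      dotProduct_comm (perpOf w) (perpOf y)]
    ring
  rw [hexpand]
  gcongr
  exact perpOf_dotProduct_self_le w

/-- Cauchy–Schwarz for the semi-inner product `⟨y, z⟩ = yᵀ A z`, applied to `p` and `A p`. -/
lemma euclNorm_mulVec_le {A : Matrix (Fin N) (Fin N) ℝ} {lam : ℝ} (hA : A.IsSymm)
    (hpsd : A.PosSemidef) (hA1 : A *ᵥ 1 = 0) (hlam : 0 ≤ lam)
    (hhi : ∀ y : Fin N → ℝ, ∑ n, y n = 0 → quadForm A y ≤ lam * euclNorm y ^ 2)
    {p : Fin N → ℝ} (hp : ∑ n, p n = 0) : euclNorm (A *ᵥ p) ≤ lam * euclNorm p := by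
  set z := A *ᵥ p
  have hsymm : ∀ y w : Fin N → ℝ, y ⬝ᵥ A *ᵥ w = w ⬝ᵥ A *ᵥ y := fun y w => by
    rw [Matrix.dotProduct_mulVec, ← Matrix.mulVec_transpose, hA, dotProduct_comm]
  have hz : ∑ n, z n = 0 := by
    rw [← one_dotProduct, hsymm, hA1, dotProduct_zero]
  have hCS := (Matrix.toBilin' A).apply_mul_apply_le_of_forall_zero_le
    (fun y => by simpa [Matrix.toBilin'_apply'] using hpsd.dotProduct_mulVec_nonneg y) p z
  simp only [Matrix.toBilin'_apply'] at hCS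
  rw [hsymm p z] at hCS
  have hqp : p ⬝ᵥ A *ᵥ p ≤ lam * euclNorm p ^ 2 := hhi p hp
  have hqz : z ⬝ᵥ A *ᵥ z ≤ lam * euclNorm z ^ 2 := hhi z hz
  rw [← euclNorm_sq_eq_dotProduct] at hCS
  have hr : 0 ≤ euclNorm p := Real.sqrt_nonneg _
  have hs : 0 ≤ euclNorm z := Real.sqrt_nonneg _
  have hsq : (euclNorm z ^ 2) ^ 2 ≤ (lam * euclNorm p * euclNorm z) ^ 2 := by
    calc (euclNorm z ^ 2) ^ 2 ≤ (p ⬝ᵥ A *ᵥ p) * (z ⬝ᵥ A *ᵥ z) := by rw [sq]; exact hCS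
      _ ≤ (lam * euclNorm p ^ 2) * (lam * euclNorm z ^ 2) :=
        mul_le_mul hqp hqz (hpsd.dotProduct_mulVec_nonneg z) (by positivity)
      _ = (lam * euclNorm p * euclNorm z) ^ 2 := by ring
  have h2 : euclNorm z * euclNorm z ≤ lam * euclNorm p * euclNorm z := by
    rw [← sq]
    exact (pow_le_pow_iff_left₀ (by positivity) (by positivity) two_ne_zero).1 hsq
  rcases hs.eq_or_lt with h0 | h0
  · rw [← h0]; positivity
  · exact le_of_mul_le_mul_right h2 h0

lemma sqDistConsensus_step_le {A : Matrix (Fin N) (Fin N) ℝ} {K : ℝ} (hA1 : A *ᵥ 1 = 0)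
    {y : Fin N → ℝ} (hA : euclNorm (A *ᵥ perpOf y) ≤ K * euclNorm (perpOf y))
    (u v : Fin N → ℝ) (t : ℝ) :
    sqDistConsensus (y - t • (A *ᵥ y + u + v)) ≤
      (1 + 3 * t ^ 2 * K ^ 2) * sqDistConsensus y
        - 2 * t * (perpOf y ⬝ᵥ (A *ᵥ y + u + v)) + 3 * t ^ 2 * (u ⬝ᵥ u + v ⬝ᵥ v) := by
  have hAp : (A *ᵥ y) ⬝ᵥ (A *ᵥ y) ≤ K ^ 2 * sqDistConsensus y := by
    rw [sqDistConsensus, ← mulVec_perpOf hA1, ← euclNorm_sq_eq_dotProduct,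
      ← euclNorm_sq_eq_dotProduct, ← mul_pow]
    exact pow_le_pow_left₀ (Real.sqrt_nonneg _) hA 2
  have hw := add_add_dotProduct_self_le (A *ᵥ y) u v
  have hstep := sqDistConsensus_sub_smul_le y (A *ᵥ y + u + v) t
  nlinarith [mul_le_mul_of_nonneg_left hw (sq_nonneg t),
    mul_le_mul_of_nonneg_left hAp (sq_nonneg t)]

lemma dotProduct_mulVec_add_add (A : Matrix (Fin N) (Fin N) ℝ) (p y u v : Fin N → ℝ) :
    p ⬝ᵥ (A *ᵥ y + u + v) =
      ∑ q : Fin N × Fin N, p q.1 * y q.2 * A q.1 q.2 + ∑ n, p n * (u n + v n) := by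
  simp only [Pi.add_apply, dotProduct, mulVec, Fintype.sum_prod_type, ← sum_add_distrib]
  refine sum_congr rfl fun n _ => ?_
  rw [mul_add, mul_add, mul_sum,
    sum_congr rfl (g := fun m => p n * y m * A n m) fun m _ => by ring]
  ring

end ConsensusGeometry

namespace QCModel

abbrev stepSigma {N : ℕ} {Ω : Type} (L : ℕ → Ω → Matrix (Fin N) (Fin N) ℝ)
    (Υ Ψ : ℕ → Ω → Fin N → ℝ) (i : ℕ) : MeasurableSpace Ω :=
  MeasurableSpace.comap (fun ω n m => L i ω n m) inferInstance ⊔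
    MeasurableSpace.comap (Υ i) inferInstance ⊔ MeasurableSpace.comap (Ψ i) inferInstance

variable {N : ℕ} {Ω : Type} {L : ℕ → Ω → Matrix (Fin N) (Fin N) ℝ} {Υ Ψ : ℕ → Ω → Fin N → ℝ}

lemma measurable_L_apply_stepSigma (i : ℕ) (n m : Fin N) :
    Measurable[stepSigma L Υ Ψ i] fun ω => L i ω n m :=
  (measurable_pi_apply m).comp ((measurable_pi_apply n).comp
    (Measurable.of_comap_le (le_sup_left.trans le_sup_left)))

lemma measurable_Υ_stepSigma (i : ℕ) : Measurable[stepSigma L Υ Ψ i] (Υ i) :=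
  Measurable.of_comap_le (le_sup_right.trans le_sup_left)

lemma measurable_Ψ_stepSigma (i : ℕ) : Measurable[stepSigma L Υ Ψ i] (Ψ i) :=
  Measurable.of_comap_le le_sup_right

variable {Δ : ℝ} {M : ℕ} {α : ℕ → ℝ} {Lbar : Matrix (Fin N) (Fin N) ℝ} {lam2 lamN : ℝ}
  [mΩ : MeasurableSpace Ω] {Pr : Measure Ω} {x0 : Fin N → ℝ} {x : ℕ → Ω → Fin N → ℝ}
  {ℱ : Filtration ℕ mΩ} (h : QCModel N Δ M α Lbar lam2 lamN Pr x0 x L Υ Ψ ℱ)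
include h

lemma stepSigma_le (i : ℕ) : stepSigma L Υ Ψ i ≤ mΩ :=
  sup_le (sup_le
    (measurable_pi_iff.2 fun n => measurable_pi_iff.2 fun m => h.hL_meas i n m).comap_le
    (h.hΥ_meas i).comap_le) (h.hΨ_meas i).comap_le

lemma stepSigma_le_filtration {i j : ℕ} (hji : j < i) : stepSigma L Υ Ψ j ≤ ℱ i := by
  rw [h.hℱ i]
  exact le_biSup (stepSigma L Υ Ψ) hji

lemma indep_stepSigma (i : ℕ) : Indep (stepSigma L Υ Ψ i) (ℱ i) Pr := by
  have hle : stepSigma L Υ Ψ i ≤ mΩ := h.stepSigma_le i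
  have h_le : ∀ k, ![MeasurableSpace.comap (fun ω n m => L i ω n m) inferInstance,
      MeasurableSpace.comap (Υ i) inferInstance, MeasurableSpace.comap (Ψ i) inferInstance,
      ℱ i] k ≤ mΩ := by
    intro k
    fin_cases k
    exacts [le_sup_left.trans (le_sup_left.trans hle),
      le_sup_right.trans (le_sup_left.trans hle), le_sup_right.trans hle, ℱ.le i]
  have := indep_iSup_of_disjoint h_le (h.hindep i) (S := {0, 1, 2}) (T := {3})
    (Set.disjoint_singleton_right.2 (by simp))
  convert this using 1
  · rw [_root_.iSup_insert, _root_.iSup_insert, _root_.iSup_singleton]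
    simp [sup_assoc]
  · simp

lemma x_succ_apply (i : ℕ) (ω : Ω) (n : Fin N) :
    x (i + 1) ω n = x i ω n - α i * (∑ m, L i ω n m * x i ω m + Υ i ω n + Ψ i ω n) := by
  rw [h.hrec i ω]; rfl

lemma measurable_x_apply (i : ℕ) (n : Fin N) : Measurable[ℱ i] fun ω => x i ω n := by
  induction i generalizing n with
  | zero => simp only [h.hx0]; exact measurable_const
  | succ i ih =>
    have hle := h.stepSigma_le_filtration (Nat.lt_succ_self i)
    have hx : ∀ m, Measurable[ℱ (i + 1)] fun ω => x i ω m := fun m =>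
      (ih m).mono (ℱ.mono i.le_succ) le_rfl
    have hL : ∀ m, Measurable[ℱ (i + 1)] fun ω => L i ω n m := fun m =>
      (measurable_L_apply_stepSigma i n m).mono hle le_rfl
    have hΥ : Measurable[ℱ (i + 1)] fun ω => Υ i ω n :=
      ((measurable_pi_apply n).comp (measurable_Υ_stepSigma i)).mono hle le_rfl
    have hΨ : Measurable[ℱ (i + 1)] fun ω => Ψ i ω n :=
      ((measurable_pi_apply n).comp (measurable_Ψ_stepSigma i)).mono hle le_rfl
    simp only [h.x_succ_apply]
    exact (hx n).fun_sub ((((Finset.measurable_sum _ fun m _ => (hL m).fun_mul (hx m)).fun_add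
      hΥ).fun_add hΨ).const_mul _)

lemma measurable_perpOf_x_apply (i : ℕ) (n : Fin N) :
    Measurable[ℱ i] fun ω => perpOf (x i ω) n :=
  (h.measurable_x_apply i n).fun_sub
    ((Finset.measurable_sum _ fun m _ => h.measurable_x_apply i m).div_const _)

lemma abs_L_apply_le (i : ℕ) (n m : Fin N) : ∀ᵐ ω ∂Pr, |L i ω n m| ≤ |Lbar n m| + 2 * N := by
  filter_upwards [h.hL_op i] with ω hop
  have hcol := (abs_le_euclNorm _ n).trans (hop (Pi.single m 1))
  rw [mulVec_single_one, euclNorm_single_one, mul_one] at hcol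
  have := abs_sub_abs_le_abs_sub (L i ω n m) (Lbar n m)
  simp only [col_apply, Matrix.sub_apply] at hcol
  linarith

lemma memLp_x (i : ℕ) : MemLp (x i) 2 Pr := by
  have := h.hprob
  induction i with
  | zero => rw [funext h.hx0]; exact memLp_const x0
  | succ i ih =>
    have hterm : ∀ n m, MemLp (fun ω => L i ω n m * x i ω m) 2 Pr := fun n m => by
      refine (memLp_pi_iff.1 ih m).of_le_mul (c := |Lbar n m| + 2 * N) ?_ ?_
      · exact ((h.hL_meas i n m).fun_mul
          ((h.measurable_x_apply i m).mono (ℱ.le i) le_rfl)).aestronglyMeasurable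
      · filter_upwards [h.abs_L_apply_le i n m] with ω hω
        rw [Real.norm_eq_abs, Real.norm_eq_abs, abs_mul]
        exact mul_le_mul_of_nonneg_right hω (abs_nonneg _)
    have hLx : MemLp (fun ω => L i ω *ᵥ x i ω) 2 Pr :=
      memLp_pi_iff.2 fun n => by
        simpa only [mulVec, dotProduct] using memLp_finsetSum univ fun m _ => hterm n m
    rw [funext (h.hrec i)]
    exact ih.sub (((hLx.add (h.hΥ_L2 i)).add (h.hΨ_L2 i)).const_smul (α i))

lemma memLp_perpOf_x (i : ℕ) : MemLp (fun ω => perpOf (x i ω)) 2 Pr :=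
  memLp_pi_iff.2 fun n => (memLp_pi_iff.1 (h.memLp_x i) n).sub
    ((memLp_finsetSum _ fun m _ => memLp_pi_iff.1 (h.memLp_x i) m).mul_const (N : ℝ)⁻¹)

lemma integrable_sqDistConsensus_x (i : ℕ) :
    Integrable (fun ω => sqDistConsensus (x i ω)) Pr :=
  (h.memLp_perpOf_x i).integrable_dotProduct_self

lemma measurable_sqDistConsensus_x (i : ℕ) :
    Measurable[ℱ i] fun ω => sqDistConsensus (x i ω) :=
  Finset.measurable_sum univ fun n _ =>
    (h.measurable_perpOf_x_apply i n).fun_mul (h.measurable_perpOf_x_apply i n)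

lemma sqDistConsensus_succ_le (i : ℕ) : ∀ᵐ ω ∂Pr, sqDistConsensus (x (i + 1) ω) ≤
    (1 + 3 * α i ^ 2 * (lamN + 2 * N) ^ 2) * sqDistConsensus (x i ω)
      - 2 * α i * (perpOf (x i ω) ⬝ᵥ (L i ω *ᵥ x i ω + Υ i ω + Ψ i ω))
      + 3 * α i ^ 2 * (Υ i ω ⬝ᵥ Υ i ω + Ψ i ω ⬝ᵥ Ψ i ω) := by
  filter_upwards [h.hL_one i, h.hL_op i] with ω hL1 hop
  rw [h.hrec i ω]
  refine sqDistConsensus_step_le hL1 ?_ _ _ _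
  have hLbar := euclNorm_mulVec_le h.hLbar_symm h.hLbar_psd h.hLbar_one
    (h.hlam2_pos.le.trans h.hlam_le) h.hspec_hi (sum_perpOf (x i ω))
  calc euclNorm (L i ω *ᵥ perpOf (x i ω))
      = euclNorm ((L i ω - Lbar) *ᵥ perpOf (x i ω) + Lbar *ᵥ perpOf (x i ω)) := by
        rw [sub_mulVec, sub_add_cancel]
    _ ≤ 2 * N * euclNorm (perpOf (x i ω)) + lamN * euclNorm (perpOf (x i ω)) :=
        (euclNorm_add_le _ _).trans (add_le_add (hop _) hLbar)
    _ = (lamN + 2 * N) * euclNorm (perpOf (x i ω)) := by ring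

lemma integrable_L_apply (i : ℕ) (n m : Fin N) : Integrable (fun ω => L i ω n m) Pr :=
  have := h.hprob
  .of_bound (h.hL_meas i n m).aestronglyMeasurable _ (by
    simpa only [Real.norm_eq_abs] using h.abs_L_apply_le i n m)

lemma integrable_perpOf_mul_x_mul_L (i : ℕ) (n m : Fin N) :
    Integrable (fun ω => perpOf (x i ω) n * x i ω m * L i ω n m) Pr :=
  ((memLp_pi_iff.1 (h.memLp_perpOf_x i) n).integrable_mul (memLp_pi_iff.1 (h.memLp_x i) m)).mul_bdd
    (h.hL_meas i n m).aestronglyMeasurable (by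
      simpa only [Real.norm_eq_abs] using h.abs_L_apply_le i n m)

lemma integrable_perpOf_mul_noise (i : ℕ) (n : Fin N) :
    Integrable (fun ω => perpOf (x i ω) n * (Υ i ω n + Ψ i ω n)) Pr :=
  (memLp_pi_iff.1 (h.memLp_perpOf_x i) n).integrable_mul
    ((memLp_pi_iff.1 (h.hΥ_L2 i) n).add (memLp_pi_iff.1 (h.hΨ_L2 i) n))

lemma condExp_perpOf_dotProduct_increment (i : ℕ) :
    Pr[fun ω => perpOf (x i ω) ⬝ᵥ (L i ω *ᵥ x i ω + Υ i ω + Ψ i ω)|ℱ i]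
      =ᵐ[Pr] fun ω => quadForm Lbar (perpOf (x i ω)) := by
  have := h.hprob
  have hΥ n : Integrable (fun ω => Υ i ω n) Pr :=
    (memLp_pi_iff.1 (h.hΥ_L2 i) n).integrable one_le_two
  have hΨ n : Integrable (fun ω => Ψ i ω n) Pr :=
    (memLp_pi_iff.1 (h.hΨ_L2 i) n).integrable one_le_two
  have hLterm := condExp_sum_mul_ae_eq_of_indep (ℱ.le i) (h.stepSigma_le i) (h.indep_stepSigma i)
    univ (f := fun (q : Fin N × Fin N) ω => perpOf (x i ω) q.1 * x i ω q.2)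
    (g := fun q ω => L i ω q.1 q.2)
    (fun q => ((h.measurable_perpOf_x_apply i q.1).fun_mul
      (h.measurable_x_apply i q.2)).stronglyMeasurable)
    (fun q => (measurable_L_apply_stepSigma i q.1 q.2).stronglyMeasurable)
    (fun q => h.integrable_perpOf_mul_x_mul_L i q.1 q.2) fun q => h.integrable_L_apply i q.1 q.2
  have hnoiseTerm := condExp_sum_mul_ae_eq_of_indep (ℱ.le i) (h.stepSigma_le i)
    (h.indep_stepSigma i) univ (f := fun n ω => perpOf (x i ω) n)
    (g := fun n ω => Υ i ω n + Ψ i ω n)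
    (fun n => (h.measurable_perpOf_x_apply i n).stronglyMeasurable)
    (fun n => (((measurable_pi_apply n).comp (measurable_Υ_stepSigma i)).fun_add
      ((measurable_pi_apply n).comp (measurable_Ψ_stepSigma i))).stronglyMeasurable)
    (h.integrable_perpOf_mul_noise i) fun n => (hΥ n).add (hΨ n)
  simp only [dotProduct_mulVec_add_add]
  refine (condExp_add (integrable_finsetSum _ fun q _ => h.integrable_perpOf_mul_x_mul_L i q.1 q.2)
    (integrable_finsetSum _ fun n _ => h.integrable_perpOf_mul_noise i n) (ℱ i)).trans
    ((hLterm.add hnoiseTerm).trans (Eventually.of_forall fun ω => ?_))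
  simp only [Pi.add_apply, h.hL_mean, integral_add (hΥ _) (hΨ _), h.hΥ_mean, h.hΨ_mean, add_zero,
    mul_zero, sum_const_zero]
  rw [quadForm, mulVec_perpOf h.hLbar_one]
  simp only [mulVec, dotProduct, Fintype.sum_prod_type, mul_sum]
  exact sum_congr rfl fun n _ => sum_congr rfl fun m _ => by ring

lemma condExp_noise_le (i : ℕ) :
    Pr[fun ω => Υ i ω ⬝ᵥ Υ i ω + Ψ i ω ⬝ᵥ Ψ i ω|ℱ i] ≤ᵐ[Pr] fun _ => M * Δ ^ 2 / 3 := by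
  have := h.hprob
  have hsq : Continuous fun y : Fin N → ℝ => y ⬝ᵥ y := by fun_prop
  have hmeas : StronglyMeasurable[stepSigma L Υ Ψ i] fun ω => Υ i ω ⬝ᵥ Υ i ω + Ψ i ω ⬝ᵥ Ψ i ω :=
    ((hsq.measurable.comp (measurable_Υ_stepSigma i)).fun_add
      (hsq.measurable.comp (measurable_Ψ_stepSigma i))).stronglyMeasurable
  filter_upwards [condExp_indep_eq (h.stepSigma_le i) (ℱ.le i) hmeas (h.indep_stepSigma i)]
    with ω hω
  rw [hω, integral_add (h.hΥ_L2 i).integrable_dotProduct_self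
    (h.hΨ_L2 i).integrable_dotProduct_self]
  simp only [← euclNorm_sq_eq_dotProduct]
  linarith [h.hvar_le i, h.hvar_eq i]

lemma condExp_sqDistConsensus_succ_le (i : ℕ) :
    Pr[fun ω => sqDistConsensus (x (i + 1) ω)|ℱ i] ≤ᵐ[Pr] fun ω =>
      (1 + 3 * α i ^ 2 * (lamN + 2 * N) ^ 2) * sqDistConsensus (x i ω)
        - 2 * lam2 * (α i * sqDistConsensus (x i ω)) + α i ^ 2 * (M * Δ ^ 2) := by
  have := h.hprob
  set c := 1 + 3 * α i ^ 2 * (lamN + 2 * N) ^ 2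
  set V : Ω → ℝ := fun ω => sqDistConsensus (x i ω)
  set P : Ω → ℝ := fun ω => perpOf (x i ω) ⬝ᵥ (L i ω *ᵥ x i ω + Υ i ω + Ψ i ω)
  set Q : Ω → ℝ := fun ω => Υ i ω ⬝ᵥ Υ i ω + Ψ i ω ⬝ᵥ Ψ i ω
  have hVi : Integrable V Pr := h.integrable_sqDistConsensus_x i
  have hPi : Integrable P Pr := by
    simp only [P, dotProduct_mulVec_add_add]
    exact (integrable_finsetSum _ fun q _ => h.integrable_perpOf_mul_x_mul_L i q.1 q.2).add
      (integrable_finsetSum _ fun n _ => h.integrable_perpOf_mul_noise i n)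
  have hQi : Integrable Q Pr :=
    (h.hΥ_L2 i).integrable_dotProduct_self.add (h.hΨ_L2 i).integrable_dotProduct_self
  have hGi : Integrable (c • V - (2 * α i) • P + (3 * α i ^ 2) • Q) Pr :=
    ((hVi.smul c).sub (hPi.smul _)).add (hQi.smul _)
  have hcV : Pr[c • V|ℱ i] = c • V := condExp_of_stronglyMeasurable (ℱ.le i)
    ((h.measurable_sqDistConsensus_x i).stronglyMeasurable.const_smul c) (hVi.smul c)
  filter_upwards [condExp_mono (m := ℱ i) (h.integrable_sqDistConsensus_x (i + 1)) hGi
      (h.sqDistConsensus_succ_le i),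
    condExp_add ((hVi.smul c).sub (hPi.smul (2 * α i))) (hQi.smul (3 * α i ^ 2)) (ℱ i),
    condExp_sub (hVi.smul c) (hPi.smul (2 * α i)) (ℱ i),
    condExp_smul (2 * α i) P (ℱ i), condExp_smul (3 * α i ^ 2) Q (ℱ i),
    h.condExp_perpOf_dotProduct_increment i, h.condExp_noise_le i]
    with ω hmono hadd hsub hsmulP hsmulQ hP hQ
  rw [hadd, Pi.add_apply, hsub, Pi.sub_apply, hsmulP, hsmulQ, hcV] at hmono
  simp only [Pi.smul_apply, smul_eq_mul] at hmono
  rw [hP] at hmono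
  have hquad : lam2 * V ω ≤ quadForm Lbar (perpOf (x i ω)) := by
    have := h.hspec_lo _ (sum_perpOf (x i ω))
    rwa [euclNorm_sq_eq_dotProduct] at this
  have hα := (h.hα_pos i).le
  nlinarith [mul_le_mul_of_nonneg_left hquad (by positivity : (0 : ℝ) ≤ 2 * α i),
    mul_le_mul_of_nonneg_left hQ (by positivity : (0 : ℝ) ≤ 3 * α i ^ 2)]

lemma ae_tendsto_sqDistConsensus_and_summable : ∀ᵐ ω ∂Pr,
    (∃ v, Tendsto (fun n => sqDistConsensus (x n ω)) atTop (𝓝 v)) ∧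
      Summable fun n => α n * sqDistConsensus (x n ω) := by
  have := h.hprob
  have hα0 n : 0 ≤ α n := (h.hα_pos n).le
  have hV0 n ω : 0 ≤ sqDistConsensus (x n ω) := sqDistConsensus_nonneg _
  have hRS := ae_tendsto_and_summable_of_condExp_le_s2 (μ := Pr) (ℱ := ℱ)
    (V := fun n ω => sqDistConsensus (x n ω))
    (b := fun n ω => 2 * lam2 * (α n * sqDistConsensus (x n ω)))
    (a := fun n => 3 * α n ^ 2 * (lamN + 2 * N) ^ 2) (c := fun n => α n ^ 2 * (M * Δ ^ 2))
    (fun n => (h.measurable_sqDistConsensus_x n).stronglyMeasurable)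
    (fun n => (((h.measurable_sqDistConsensus_x n).const_mul (α n)).const_mul
      (2 * lam2)).stronglyMeasurable)
    h.integrable_sqDistConsensus_x
    (fun n => ((h.integrable_sqDistConsensus_x n).const_mul (α n)).const_mul (2 * lam2))
    hV0 (fun n ω => by have := h.hlam2_pos; have := hα0 n; have := hV0 n ω; positivity)
    (fun n => by positivity) ((h.hα_sq.mul_left 3).mul_right _) (fun n => by positivity)
    (h.hα_sq.mul_right _) h.condExp_sqDistConsensus_succ_le
  filter_upwards [hRS] with ω ⟨hconv, hsum⟩
  exact ⟨hconv, (summable_mul_left_iff (by linarith [h.hlam2_pos] : 2 * lam2 ≠ 0)).1 hsum⟩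

end QCModel

theorem stmt_2 {N : ℕ} {Δ : ℝ} {M : ℕ} {α : ℕ → ℝ}
    {Lbar : Matrix (Fin N) (Fin N) ℝ} {lam2 lamN : ℝ}
    {Ω : Type} [mΩ : MeasurableSpace Ω] {Pr : Measure Ω}
    {x0 : Fin N → ℝ} {x : ℕ → Ω → Fin N → ℝ}
    {L : ℕ → Ω → Matrix (Fin N) (Fin N) ℝ} {Υ Ψ : ℕ → Ω → Fin N → ℝ}
    {ℱ : Filtration ℕ mΩ}
    (h : QCModel N Δ M α Lbar lam2 lamN Pr x0 x L Υ Ψ ℱ) :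
    ∀ᵐ ω ∂Pr, Tendsto (fun i => euclNorm (perpOf (x i ω))) atTop (nhds 0) := by
  filter_upwards [h.ae_tendsto_sqDistConsensus_and_summable] with ω ⟨⟨v, hv⟩, hsum⟩
  have hv0 : v = 0 := eq_zero_of_tendsto_of_summable_mul (fun n => (h.hα_pos n).le) h.hα_div hv
    (fun n => sqDistConsensus_nonneg _) hsum
  have hsqrt := (Real.continuous_sqrt.tendsto 0).comp (hv0 ▸ hv)
  rw [Real.sqrt_zero] at hsqrt
  simp only [euclNorm_perpOf]
  exact hsqrt
end
end

section
/- Let r₁(t) = a₁/(t+1)^{δ₁} and r₂(t) = a₂/(t+1)^{δ₂} for t ∈ ℕ, where 0 < a₁ ≤ 1, a₂ ≥ 0, 0 ≤ δ₁ ≤ 1 and δ₂ ≥ 0. Then: (i) if δ₁ = δ₂, there exists a constant K > 0, independent of s and t, such that for all nonnegative integers s < t, 0 ≤ ∑_{k=s}^{t−1} ( ∏_{l=k+1}^{t−1} (1 − r₁(l)) )·r₂(k) ≤ K; and (ii) if δ₁ < δ₂, then for every fixed nonnegative integer s, lim_{t→∞} ∑_{k=s}^{t−1} ( ∏_{l=k+1}^{t−1}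 (1 − r₁(l)) )·r₂(k) = 0. -/
open Filter Finset

noncomputable section

private lemma telescope_sum' (r : ℕ → ℝ) (s t : ℕ) (hst : s ≤ t) :
    ∑ k ∈ Finset.Ico s t, (∏ l ∈ Finset.Ico (k + 1) t, (1 - r l)) * r k
      = 1 - ∏ l ∈ Finset.Ico s t, (1 - r l) := by
  have key : ∀ k ∈ Finset.Ico s t,
      (∏ l ∈ Finset.Ico (k + 1) t, (1 - r l)) * r k
        = (∏ l ∈ Finset.Ico (k+1) t, (1 - r l)) - ∏ l ∈ Finset.Ico k t, (1 - r l) := by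
    intro k hk
    rw [Finset.prod_eq_prod_Ico_succ_bot (Finset.mem_Ico.1 hk).2]
    ring
  rw [Finset.sum_congr rfl key]
  have h2 : ∀ g : ℕ → ℝ, ∑ k ∈ Finset.Ico s t, (g (k+1) - g k) = g t - g s := by
    intro g
    rw [Finset.sum_Ico_eq_sub _ hst, Finset.sum_range_sub, Finset.sum_range_sub]
    ring
  rw [h2 (fun k => ∏ l ∈ Finset.Ico k t, (1 - r l)), Finset.Ico_self, Finset.prod_empty]


/-- Lemma 18 of Kar–Moura–Ramanan: with `r₁(t) = a₁/(t+1)^{δ₁}` and `r₂(t) = a₂/(t+1)^{δ₂}`,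
(i) if `δ₁ = δ₂` the sums `∑_{k=s}^{t−1} (∏_{l=k+1}^{t−1} (1 − r₁(l))) r₂(k)` are nonnegative
and bounded by a constant `K` independent of `s < t`; (ii) if `δ₁ < δ₂` they tend to `0` as
`t → ∞` for every fixed `s`. -/
theorem stmt_18 (a₁ a₂ δ₁ δ₂ : ℝ)
    (ha₁ : 0 < a₁) (ha₁' : a₁ ≤ 1) (ha₂ : 0 ≤ a₂)
    (hδ₁0 : 0 ≤ δ₁) (hδ₁1 : δ₁ ≤ 1) (hδ₂ : 0 ≤ δ₂) :
    (δ₁ = δ₂ → ∃ K > (0 : ℝ), ∀ s t : ℕ, s < t →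
      0 ≤ ∑ k ∈ Finset.Ico s t,
            (∏ l ∈ Finset.Ico (k + 1) t, (1 - a₁ / ((l : ℝ) + 1) ^ δ₁)) *
              (a₂ / ((k : ℝ) + 1) ^ δ₂) ∧
      ∑ k ∈ Finset.Ico s t,
            (∏ l ∈ Finset.Ico (k + 1) t, (1 - a₁ / ((l : ℝ) + 1) ^ δ₁)) *
              (a₂ / ((k : ℝ) + 1) ^ δ₂) ≤ K) ∧
    (δ₁ < δ₂ → ∀ s : ℕ,
      Tendsto (fun t : ℕ => ∑ k ∈ Finset.Ico s t,
          (∏ l ∈ Finset.Ico (k + 1) t, (1 - a₁ / ((l : ℝ) + 1) ^ δ₁)) *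
            (a₂ / ((k : ℝ) + 1) ^ δ₂)) atTop (nhds 0)) := by
  set r : ℕ → ℝ := fun l => a₁ / ((l : ℝ) + 1) ^ δ₁ with hr
  set q : ℕ → ℝ := fun k => a₂ / ((k : ℝ) + 1) ^ δ₂ with hq
  have hxpos : ∀ l : ℕ, (0:ℝ) < (l : ℝ) + 1 := fun l => by positivity
  have hx1 : ∀ l : ℕ, (1:ℝ) ≤ (l : ℝ) + 1 := fun l => by
    have := Nat.cast_nonneg (α := ℝ) l; linarith
  have hpow1 : ∀ l : ℕ, (1:ℝ) ≤ ((l : ℝ) + 1) ^ δ₁ :=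
    fun l => Real.one_le_rpow (hx1 l) hδ₁0
  have hpowpos : ∀ l : ℕ, (0:ℝ) < ((l : ℝ) + 1) ^ δ₁ :=
    fun l => lt_of_lt_of_le one_pos (hpow1 l)
  have hr_pos : ∀ l, 0 < r l := fun l => div_pos ha₁ (hpowpos l)
  have hr_le1 : ∀ l, r l ≤ 1 := fun l => by
    rw [hr, div_le_one (hpowpos l)]; exact le_trans ha₁' (hpow1 l)
  have hq_nonneg : ∀ k, 0 ≤ q k := fun k => by
    have : (0:ℝ) < ((k : ℝ) + 1) ^ δ₂ :=
      lt_of_lt_of_le one_pos (Real.one_le_rpow (hx1 k) hδ₂)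
    positivity
  have hfac : ∀ l : ℕ, 0 ≤ 1 - r l := fun l => by linarith [hr_le1 l]
  have hP_nonneg : ∀ m t : ℕ, 0 ≤ ∏ l ∈ Finset.Ico m t, (1 - r l) :=
    fun m t => Finset.prod_nonneg fun l _ => hfac l
  have hP_le1 : ∀ m t : ℕ, ∏ l ∈ Finset.Ico m t, (1 - r l) ≤ 1 :=
    fun m t => Finset.prod_le_one (fun l _ => hfac l)
      (fun l _ => by linarith [hr_pos l])
  have hS_nonneg : ∀ s t : ℕ,
      0 ≤ ∑ k ∈ Finset.Ico s t, (∏ l ∈ Finset.Ico (k + 1) t, (1 - r l)) * q k :=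
    fun s t => Finset.sum_nonneg fun k _ =>
      mul_nonneg (hP_nonneg _ _) (hq_nonneg k)
  constructor
  · -- part (i)
    intro hδ
    refine ⟨a₂ / a₁ + 1, by positivity, fun s t hst => ⟨hS_nonneg s t, ?_⟩⟩
    have hqr : ∀ k : ℕ, q k = (a₂ / a₁) * r k := by
      intro k
      rw [hq, hr, ← hδ]
      field_simp
    calc ∑ k ∈ Finset.Ico s t, (∏ l ∈ Finset.Ico (k + 1) t, (1 - r l)) * q k
        = (a₂ / a₁) * ∑ k ∈ Finset.Ico s t,
            (∏ l ∈ Finset.Ico (k + 1) t, (1 - r l)) * r k := by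
          rw [Finset.mul_sum]
          exact Finset.sum_congr rfl fun k _ => by rw [hqr k]; ring
      _ = (a₂ / a₁) * (1 - ∏ l ∈ Finset.Ico s t, (1 - r l)) := by
          rw [telescope_sum' r s t hst.le]
      _ ≤ (a₂ / a₁) * 1 := by
          apply mul_le_mul_of_nonneg_left _ (by positivity)
          linarith [hP_nonneg s t]
      _ ≤ a₂ / a₁ + 1 := by linarith
  · -- part (ii)
    intro hδ s
    set δ : ℝ := δ₂ - δ₁ with hδdef
    have hδpos : 0 < δ := by simp [hδdef]; linarith
    rw [Metric.tendsto_atTop]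
    intro ε hε
    -- choose m
    have hlim1 : Tendsto (fun m : ℕ => (a₂ / a₁) * ((m : ℝ) + 1) ^ (-δ)) atTop (nhds 0) := by
      have h1 : Tendsto (fun m : ℕ => (m : ℝ) + 1) atTop atTop :=
        tendsto_atTop_add_const_right _ 1 tendsto_natCast_atTop_atTop
      have h2 := (tendsto_rpow_neg_atTop hδpos).comp h1
      have := h2.const_mul (a₂ / a₁)
      simpa using this
    obtain ⟨m, hsm, hm_small⟩ :
        ∃ m : ℕ, s ≤ m ∧ (a₂ / a₁) * ((m : ℝ) + 1) ^ (-δ) < ε / 2 := by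
      have := (hlim1.eventually_lt_const (half_pos hε)).and (eventually_ge_atTop s)
      obtain ⟨m, h1, h2⟩ := this.exists
      exact ⟨m, h2, h1⟩
    set C : ℝ := ∑ k ∈ Finset.Ico s m, q k with hC
    have hC_nonneg : 0 ≤ C := Finset.sum_nonneg fun k _ => hq_nonneg k
    -- P m t → 0
    have hP0 : Tendsto (fun t : ℕ => ∏ l ∈ Finset.Ico m t, (1 - r l)) atTop (nhds 0) := by
      have hA : Tendsto (fun t : ℕ => ∑ l ∈ Finset.Ico m t, r l) atTop atTop := by
        have hH : Tendsto (fun t : ℕ => a₁ * ∑ i ∈ Finset.range t, 1 / ((i : ℝ) + 1)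
            - a₁ * ∑ i ∈ Finset.range m, 1 / ((i : ℝ) + 1)) atTop atTop := by
          apply tendsto_atTop_add_const_right
          exact Real.tendsto_sum_range_one_div_nat_succ_atTop.const_mul_atTop ha₁
        apply tendsto_atTop_mono _ hH
        intro t
        rcases le_or_gt m t with h | h
        · rw [← mul_sub, ← Finset.sum_Ico_eq_sub _ h, Finset.mul_sum]
          apply Finset.sum_le_sum
          intro l _
          rw [hr, mul_one_div]
          apply div_le_div_of_nonneg_left ha₁.le (hpowpos l)
          calc ((l:ℝ)+1) ^ δ₁ ≤ ((l:ℝ)+1) ^ (1:ℝ) :=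
                Real.rpow_le_rpow_of_exponent_le (hx1 l) hδ₁1
            _ = (l:ℝ)+1 := Real.rpow_one _
        · have h1 : Finset.Ico m t = ∅ := Finset.Ico_eq_empty (by omega)
          rw [h1, Finset.sum_empty, ← mul_sub]
          have h2 : ∑ i ∈ Finset.range t, 1 / ((i : ℝ) + 1)
              ≤ ∑ i ∈ Finset.range m, 1 / ((i : ℝ) + 1) := by
            apply Finset.sum_le_sum_of_subset_of_nonneg
            · exact Finset.range_subset_range.2 h.le
            · intro i _ _; positivity
          nlinarith
      have hexp : Tendsto (fun t : ℕ => Real.exp (-∑ l ∈ Finset.Ico m t, r l))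
          atTop (nhds 0) :=
        Real.tendsto_exp_atBot.comp (tendsto_neg_atBot_iff.2 hA)
      apply squeeze_zero (fun t => hP_nonneg m t) _ hexp
      intro t
      calc ∏ l ∈ Finset.Ico m t, (1 - r l)
          ≤ ∏ l ∈ Finset.Ico m t, Real.exp (-r l) := by
            apply Finset.prod_le_prod (fun l _ => hfac l)
            intro l _
            linarith [Real.add_one_le_exp (-r l)]
        _ = Real.exp (-∑ l ∈ Finset.Ico m t, r l) := by
            rw [← Real.exp_sum, ← Finset.sum_neg_distrib]
    -- choose N
    obtain ⟨N, hN⟩ : ∃ N : ℕ, ∀ t ≥ N,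
        C * ∏ l ∈ Finset.Ico m t, (1 - r l) < ε / 2 ∧ m ≤ t := by
      have h1 := (hP0.const_mul C).eventually_lt_const (by rw [mul_zero]; exact half_pos hε)
      exact (eventually_atTop.1 (h1.and (eventually_ge_atTop m)))
    refine ⟨N, fun t ht => ?_⟩
    obtain ⟨hCP, hmt⟩ := hN t ht
    rw [Real.dist_eq, sub_zero, abs_of_nonneg (hS_nonneg s t)]
    -- split the sum
    rw [← Finset.sum_Ico_consecutive _ hsm hmt]
    have bound1 : ∑ k ∈ Finset.Ico s m, (∏ l ∈ Finset.Ico (k + 1) t, (1 - r l)) * q k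
        ≤ C * ∏ l ∈ Finset.Ico m t, (1 - r l) := by
      rw [hC, Finset.sum_mul]
      apply Finset.sum_le_sum
      intro k hk
      have hk' : k + 1 ≤ m := (Finset.mem_Ico.1 hk).2
      rw [← Finset.prod_Ico_consecutive _ hk' hmt]
      have := mul_le_of_le_one_left (hP_nonneg m t) (hP_le1 (k+1) m)
      calc (∏ l ∈ Finset.Ico (k+1) m, (1 - r l)) * (∏ l ∈ Finset.Ico m t, (1 - r l)) * q k
          ≤ (∏ l ∈ Finset.Ico m t, (1 - r l)) * q k :=
            mul_le_mul_of_nonneg_right this (hq_nonneg k)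
        _ = q k * ∏ l ∈ Finset.Ico m t, (1 - r l) := by ring
    have bound2 : ∑ k ∈ Finset.Ico m t, (∏ l ∈ Finset.Ico (k + 1) t, (1 - r l)) * q k
        ≤ ε / 2 := by
      have hqb : ∀ k ∈ Finset.Ico m t,
          (∏ l ∈ Finset.Ico (k + 1) t, (1 - r l)) * q k
            ≤ ((a₂ / a₁) * ((m : ℝ) + 1) ^ (-δ)) *
                ((∏ l ∈ Finset.Ico (k + 1) t, (1 - r l)) * r k) := by
        intro k hk
        have hmk : m ≤ k := (Finset.mem_Ico.1 hk).1
        have hd : ((k:ℝ)+1) ^ (-δ) ≤ ((m:ℝ)+1) ^ (-δ) := by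
          apply Real.rpow_le_rpow_of_nonpos (hxpos m) _ (by linarith)
          have : (m:ℝ) ≤ (k:ℝ) := Nat.cast_le.2 hmk
          linarith
        have hq_eq : q k = (a₂ / ((k:ℝ)+1) ^ δ₁) * ((k:ℝ)+1) ^ (-δ) := by
          show a₂ / ((k:ℝ)+1) ^ δ₂ = _
          have hd2 : δ₂ = δ₁ + δ := by rw [hδdef]; ring
          rw [hd2, Real.rpow_add (hxpos k), Real.rpow_neg (hxpos k).le]
          field_simp
        have key : q k ≤ ((a₂ / a₁) * ((m : ℝ) + 1) ^ (-δ)) * r k := by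
          rw [hq_eq]
          simp only [hr]
          have h1 : (0:ℝ) ≤ a₂ / ((k:ℝ)+1) ^ δ₁ := by positivity
          calc (a₂ / ((k:ℝ)+1) ^ δ₁) * ((k:ℝ)+1) ^ (-δ)
              ≤ (a₂ / ((k:ℝ)+1) ^ δ₁) * ((m:ℝ)+1) ^ (-δ) :=
                mul_le_mul_of_nonneg_left hd h1
            _ = (a₂ / a₁) * ((m:ℝ)+1) ^ (-δ) * (a₁ / ((k:ℝ)+1) ^ δ₁) := by
                field_simp
        calc (∏ l ∈ Finset.Ico (k + 1) t, (1 - r l)) * q k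
            ≤ (∏ l ∈ Finset.Ico (k + 1) t, (1 - r l)) *
                (((a₂ / a₁) * ((m : ℝ) + 1) ^ (-δ)) * r k) :=
              mul_le_mul_of_nonneg_left key (hP_nonneg _ _)
          _ = ((a₂ / a₁) * ((m : ℝ) + 1) ^ (-δ)) *
                ((∏ l ∈ Finset.Ico (k + 1) t, (1 - r l)) * r k) := by ring
      calc ∑ k ∈ Finset.Ico m t, (∏ l ∈ Finset.Ico (k + 1) t, (1 - r l)) * q k
          ≤ ∑ k ∈ Finset.Ico m t, ((a₂ / a₁) * ((m : ℝ) + 1) ^ (-δ)) *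
              ((∏ l ∈ Finset.Ico (k + 1) t, (1 - r l)) * r k) :=
            Finset.sum_le_sum hqb
        _ = ((a₂ / a₁) * ((m : ℝ) + 1) ^ (-δ)) *
              (1 - ∏ l ∈ Finset.Ico m t, (1 - r l)) := by
            rw [← Finset.mul_sum, telescope_sum' r m t hmt]
        _ ≤ ((a₂ / a₁) * ((m : ℝ) + 1) ^ (-δ)) * 1 := by
            apply mul_le_mul_of_nonneg_left _ (by positivity)
            linarith [hP_nonneg m t]
        _ ≤ ε / 2 := by rw [mul_one]; linarith
    have := add_lt_add_of_le_of_lt bound1 hCP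
    linarith [bound2, hCP, bound1]

end
end
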